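/- If the curvature operator of the second kind R̊ is n-nonnegative (i.e. λ₁ + ⋯ + λ_n ≥ 0), then Ric(x,x) ≥ (S/(n(n+1)))·|x|² ≥ 0 for all x ∈ V. -/

import Mathlib

open scoped RealInnerProductSpace

noncomputable section

/-- The partial sum `λ₁ + ⋯ + λ_a` of the (sorted) values of `lam`, for a real index
`a`, i.e. `λ₁ + ⋯ + λ_⌊a⌋ + (a - ⌊a⌋)·λ_{⌊a⌋+1}`. -/
def psum {N : ℕ} (lam : Fin N → ℝ) (a : ℝ) : ℝ :=
  (∑ i : Fin N, if (i : ℕ) < ⌊a⌋₊ then lam i else 0) +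
    (a - (⌊a⌋₊ : ℝ)) * (if h : ⌊a⌋₊ < N then lam ⟨⌊a⌋₊, h⟩ else 0)

/-- The average of the values of `lam`. -/
def lamBar {N : ℕ} (lam : Fin N → ℝ) : ℝ := (∑ i, lam i) / (N : ℝ)

/-- The cone condition `C(a, θ)`: `a⁻¹(λ₁ + ⋯ + λ_a) ≥ -θ·λ̄`. -/
def inC {N : ℕ} (lam : Fin N → ℝ) (a θ : ℝ) : Prop :=
  -θ * lamBar lam ≤ a⁻¹ * psum lam a

/-- The open cone condition `C̊(a, θ)`: `a⁻¹(λ₁ + ⋯ + λ_a) > -θ·λ̄`. -/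
def inCint {N : ℕ} (lam : Fin N → ℝ) (a θ : ℝ) : Prop :=
  -θ * lamBar lam < a⁻¹ * psum lam a

variable {V : Type*} [NormedAddCommGroup V] [InnerProductSpace ℝ V]

/-- A quadrilinear form on `V`. -/
abbrev CurvMap (V : Type*) [NormedAddCommGroup V] [InnerProductSpace ℝ V] :=
  V →ₗ[ℝ] V →ₗ[ℝ] V →ₗ[ℝ] V →ₗ[ℝ] ℝ

/-- `R` is an algebraic curvature tensor. -/
structure IsAlgCurv (R : CurvMap V) : Prop where
  antisymm : ∀ x y z w : V, R x y z w = - R y x z w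
  pairSymm : ∀ x y z w : V, R x y z w = R z w x y
  bianchi : ∀ x y z w : V, R x y z w + R y z x w + R z x y w = 0

/-- The scalar curvature `S = Σ_{i,j} R_{ijij}` (w.r.t. the orthonormal basis `e`). -/
def scal {n : ℕ} (R : CurvMap V) (e : Fin n → V) : ℝ :=
  ∑ i, ∑ j, R (e i) (e j) (e i) (e j)

/-- The Ricci tensor `Ric(x,y) = Σ_i R(x, e_i, y, e_i)`. -/
def ric {n : ℕ} (R : CurvMap V) (e : Fin n → V) (x y : V) : ℝ :=
  ∑ i, R x (e i) y (e i)

/-- The bilinear form `R̊(φ,ψ) = Σ_{i,j,k,l} R_{iklj} φ_{kl} ψ_{ij}` of the curvature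
operator of the second kind, acting on components of two-tensors in the
orthonormal basis `e`. -/
def sok {n : ℕ} (R : CurvMap V) (e : Fin n → V) (φ ψ : Fin n → Fin n → ℝ) : ℝ :=
  ∑ i, ∑ j, ∑ k, ∑ l, R (e i) (e k) (e l) (e j) * φ k l * ψ i j

/-- The inner product `⟨φ,ψ⟩ = Σ_{i,j} φ_{ij} ψ_{ij}` on (components of) two-tensors. -/
def tip {n : ℕ} (φ ψ : Fin n → Fin n → ℝ) : ℝ := ∑ i, ∑ j, φ i j * ψ i j

/-- `φ` is (the component matrix of) a symmetric traceless two-tensor. -/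
def IsSymTr {n : ℕ} (φ : Fin n → Fin n → ℝ) : Prop :=
  (∀ i j, φ i j = φ j i) ∧ (∑ i, φ i i) = 0

/-- `lam` and `Φ` are the increasingly sorted eigenvalues, and corresponding
orthonormal eigentensors, of the curvature operator of the second kind of `R`
(expressed in components w.r.t. the orthonormal basis `e`). -/
def IsEigenSystem {n N : ℕ} (R : CurvMap V) (e : Fin n → V) (lam : Fin N → ℝ)
    (Φ : Fin N → Fin n → Fin n → ℝ) : Prop :=
  Monotone lam ∧ (∀ β, IsSymTr (Φ β)) ∧
    (∀ β γ, tip (Φ β) (Φ γ) = if β = γ then 1 else 0) ∧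
    (∀ β (ψ : Fin n → Fin n → ℝ), IsSymTr ψ → sok R e (Φ β) ψ = lam β * tip (Φ β) ψ)

/-- `R` has nonnegative isotropic curvature. -/
def NonnegIsotropic (R : CurvMap V) : Prop :=
  ∀ v : Fin 4 → V, Orthonormal ℝ v →
    0 ≤ R (v 0) (v 2) (v 0) (v 2) + R (v 0) (v 3) (v 0) (v 3) +
        R (v 1) (v 2) (v 1) (v 2) + R (v 1) (v 3) (v 1) (v 3) -
        2 * R (v 0) (v 1) (v 2) (v 3)

/-- `R` has positive isotropic curvature. -/
def PosIsotropic (R : CurvMap V) : Prop :=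
  ∀ v : Fin 4 → V, Orthonormal ℝ v →
    0 < R (v 0) (v 2) (v 0) (v 2) + R (v 0) (v 3) (v 0) (v 3) +
        R (v 1) (v 2) (v 1) (v 2) + R (v 1) (v 3) (v 1) (v 3) -
        2 * R (v 0) (v 1) (v 2) (v 3)


section MyAux

variable {V : Type*} [NormedAddCommGroup V] [InnerProductSpace ℝ V]

lemma IsAlgCurv.alt2 {R : CurvMap V} (hR : IsAlgCurv R) (x y z w : V) :
    R x y z w = - R x y w z := by
  rw [hR.pairSymm, hR.antisymm, hR.pairSymm w z x y]

lemma IsAlgCurv.diag1 {R : CurvMap V} (hR : IsAlgCurv R) (x z w : V) :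
    R x x z w = 0 := by
  have := hR.antisymm x x z w; linarith

lemma IsAlgCurv.diag2 {R : CurvMap V} (hR : IsAlgCurv R) (x y z : V) :
    R x y z z = 0 := by
  have := hR.alt2 x y z z; linarith

/-- bilinear expansion in an orthonormal basis -/
lemma expand2 {n : ℕ} {e : Fin n → V} (hb : ∀ v : V, ∑ i, ⟪v, e i⟫ • e i = v)
    (T : V →ₗ[ℝ] V →ₗ[ℝ] ℝ) (p q : V) :
    ∑ i, ∑ j, T (e i) (e j) * (⟪p, e i⟫ * ⟪q, e j⟫) = T p q := by
  conv_rhs => rw [← hb p, ← hb q]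
  simp only [map_sum, map_smul, LinearMap.sum_apply, LinearMap.smul_apply, smul_eq_mul,
    Finset.mul_sum, Finset.sum_mul]
  rw [Finset.sum_comm]
  refine Finset.sum_congr rfl fun i _ => Finset.sum_congr rfl fun j _ => by ring

end MyAux

section MyAux2

variable {V : Type*} [NormedAddCommGroup V] [InnerProductSpace ℝ V] {n : ℕ}

/-- rank one matrix of two vectors -/
def outM (e : Fin n → V) (p q : V) : Fin n → Fin n → ℝ := fun k l => ⟪p, e k⟫ * ⟪q, e l⟫

/-- identity matrix -/
def delM (n : ℕ) : Fin n → Fin n → ℝ := fun k l => if k = l then 1 else 0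

/-- tip as a bilinear map -/
def tipL (n : ℕ) : (Fin n → Fin n → ℝ) →ₗ[ℝ] (Fin n → Fin n → ℝ) →ₗ[ℝ] ℝ :=
  LinearMap.mk₂ ℝ tip
    (fun φ φ' ψ => by simp [tip, add_mul, Finset.sum_add_distrib])
    (fun c φ ψ => by simp [tip, Finset.mul_sum, mul_assoc])
    (fun φ ψ ψ' => by simp [tip, mul_add, Finset.sum_add_distrib])
    (fun c φ ψ => by
      simp only [tip, Finset.mul_sum, smul_eq_mul, Pi.smul_apply]
      exact Finset.sum_congr rfl fun i _ => Finset.sum_congr rfl fun j _ => by ring)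

lemma tipL_apply (φ ψ : Fin n → Fin n → ℝ) : tipL n φ ψ = tip φ ψ := rfl

/-- sok as a bilinear map -/
def sokL (R : CurvMap V) (e : Fin n → V) :
    (Fin n → Fin n → ℝ) →ₗ[ℝ] (Fin n → Fin n → ℝ) →ₗ[ℝ] ℝ :=
  LinearMap.mk₂ ℝ (sok R e)
    (fun φ φ' ψ => by
      simp [sok, mul_add, add_mul, Finset.sum_add_distrib])
    (fun c φ ψ => by
      simp only [sok, Finset.mul_sum, smul_eq_mul, Pi.smul_apply]
      refine Finset.sum_congr rfl fun i _ => Finset.sum_congr rfl fun j _ =>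
        Finset.sum_congr rfl fun k _ => Finset.sum_congr rfl fun l _ => by ring)
    (fun φ ψ ψ' => by
      simp [sok, mul_add, add_mul, Finset.sum_add_distrib])
    (fun c φ ψ => by
      simp only [sok, Finset.mul_sum, smul_eq_mul, Pi.smul_apply]
      refine Finset.sum_congr rfl fun i _ => Finset.sum_congr rfl fun j _ =>
        Finset.sum_congr rfl fun k _ => Finset.sum_congr rfl fun l _ => by ring)

lemma sokL_apply (R : CurvMap V) (e : Fin n → V) (φ ψ : Fin n → Fin n → ℝ) :
    sokL R e φ ψ = sok R e φ ψ := rfl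

lemma tip_comm (φ ψ : Fin n → Fin n → ℝ) : tip φ ψ = tip ψ φ := by
  simp [tip, mul_comm]

lemma tip_self_nonneg (φ : Fin n → Fin n → ℝ) : 0 ≤ tip φ φ := by
  refine Finset.sum_nonneg fun i _ => Finset.sum_nonneg fun j _ => ?_
  exact mul_self_nonneg _

lemma parseval {e : Fin n → V} (hb : ∀ v : V, ∑ i, ⟪v, e i⟫ • e i = v) (p r : V) :
    ∑ i, ⟪p, e i⟫ * ⟪r, e i⟫ = ⟪p, r⟫ := by
  conv_rhs => rw [← hb r, inner_sum]
  refine Finset.sum_congr rfl fun i _ => ?_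
  rw [real_inner_smul_right]; ring

lemma tip_out_out {e : Fin n → V} (hb : ∀ v : V, ∑ i, ⟪v, e i⟫ • e i = v) (p q r s : V) :
    tip (outM e p q) (outM e r s) = ⟪p, r⟫ * ⟪q, s⟫ := by
  rw [← parseval hb p r, ← parseval hb q s, Finset.sum_mul_sum]
  exact Finset.sum_congr rfl fun i _ => Finset.sum_congr rfl fun j _ => by
    simp [outM]; ring

lemma tip_out_del {e : Fin n → V} (hb : ∀ v : V, ∑ i, ⟪v, e i⟫ • e i = v) (p q : V) :
    tip (outM e p q) (delM n) = ⟪p, q⟫ := by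
  rw [← parseval hb p q]
  simp [tip, outM, delM, mul_ite]

lemma tip_del_del : tip (delM n) (delM n) = (n : ℝ) := by
  simp [tip, delM]

end MyAux2

section MyAux3

variable {V : Type*} [NormedAddCommGroup V] [InnerProductSpace ℝ V] {n : ℕ}

/-- the inner double contraction of sok as a bilinear map in the outer slots -/
private def Bout (R : CurvMap V) (e : Fin n → V) (φ : Fin n → Fin n → ℝ) :
    V →ₗ[ℝ] V →ₗ[ℝ] ℝ :=
  LinearMap.mk₂ ℝ (fun a b => ∑ k, ∑ l, R a (e k) (e l) b * φ k l)
    (fun a a' b => by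
      simp [map_add, LinearMap.add_apply, add_mul, Finset.sum_add_distrib])
    (fun c a b => by
      simp only [map_smul, LinearMap.smul_apply, smul_eq_mul, Finset.mul_sum]
      exact Finset.sum_congr rfl fun k _ => Finset.sum_congr rfl fun l _ => by ring)
    (fun a b b' => by
      simp [map_add, LinearMap.add_apply, add_mul, Finset.sum_add_distrib])
    (fun c a b => by
      simp only [map_smul, LinearMap.smul_apply, smul_eq_mul, Finset.mul_sum]
      exact Finset.sum_congr rfl fun k _ => Finset.sum_congr rfl fun l _ => by ring)

/-- inner bilinear map for fixed outer vectors -/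
private def Bin (R : CurvMap V) (r s : V) : V →ₗ[ℝ] V →ₗ[ℝ] ℝ :=
  LinearMap.mk₂ ℝ (fun a b => R r a b s)
    (fun a a' b => by simp [map_add, LinearMap.add_apply])
    (fun c a b => by simp [map_smul, LinearMap.smul_apply])
    (fun a b b' => by simp [map_add, LinearMap.add_apply])
    (fun c a b => by simp [map_smul, LinearMap.smul_apply])

lemma sok_outR (R : CurvMap V) {e : Fin n → V} (hb : ∀ v : V, ∑ i, ⟪v, e i⟫ • e i = v)
    (φ : Fin n → Fin n → ℝ) (r s : V) :
    sok R e φ (outM e r s) = ∑ k, ∑ l, R r (e k) (e l) s * φ k l := by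
  have h1 : sok R e φ (outM e r s)
      = ∑ i, ∑ j, Bout R e φ (e i) (e j) * (⟪r, e i⟫ * ⟪s, e j⟫) := by
    refine Finset.sum_congr rfl fun i _ => Finset.sum_congr rfl fun j _ => ?_
    simp only [Bout, LinearMap.mk₂_apply, outM, Finset.sum_mul]
  rw [h1, expand2 hb (Bout R e φ) r s]
  simp [Bout]

lemma sok_out_out (R : CurvMap V) {e : Fin n → V} (hb : ∀ v : V, ∑ i, ⟪v, e i⟫ • e i = v)
    (p q r s : V) :
    sok R e (outM e p q) (outM e r s) = R r p q s := by
  rw [sok_outR R hb]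
  have : ∑ k, ∑ l, R r (e k) (e l) s * outM e p q k l
      = ∑ k, ∑ l, Bin R r s (e k) (e l) * (⟪p, e k⟫ * ⟪q, e l⟫) := by
    refine Finset.sum_congr rfl fun k _ => Finset.sum_congr rfl fun l _ => by
      simp only [Bin, LinearMap.mk₂_apply, outM]
  rw [this, expand2 hb (Bin R r s) p q]
  simp [Bin]

lemma sok_del_out (R : CurvMap V) {e : Fin n → V} (hb : ∀ v : V, ∑ i, ⟪v, e i⟫ • e i = v)
    (r s : V) :
    sok R e (delM n) (outM e r s) = ∑ k, R r (e k) (e k) s := by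
  rw [sok_outR R hb]
  simp [delM, mul_ite]

lemma sok_del_right (R : CurvMap V) (e : Fin n → V) (φ : Fin n → Fin n → ℝ) :
    sok R e φ (delM n) = ∑ i, ∑ k, ∑ l, R (e i) (e k) (e l) (e i) * φ k l := by
  unfold sok delM
  refine Finset.sum_congr rfl fun i _ => ?_
  calc ∑ j, ∑ k, ∑ l, R (e i) (e k) (e l) (e j) * φ k l * (if i = j then (1:ℝ) else 0)
      = ∑ j, if i = j then (∑ k, ∑ l, R (e i) (e k) (e l) (e j) * φ k l) else 0 :=
        Finset.sum_congr rfl fun j _ => by split <;> simp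
    _ = _ := by rw [Finset.sum_ite_eq]; simp

lemma sok_out_del (R : CurvMap V) {e : Fin n → V} (hb : ∀ v : V, ∑ i, ⟪v, e i⟫ • e i = v)
    (p q : V) :
    sok R e (outM e p q) (delM n) = ∑ i, R (e i) p q (e i) := by
  rw [sok_del_right]
  refine Finset.sum_congr rfl fun i _ => ?_
  have : ∑ k, ∑ l, R (e i) (e k) (e l) (e i) * outM e p q k l
      = ∑ k, ∑ l, Bin R (e i) (e i) (e k) (e l) * (⟪p, e k⟫ * ⟪q, e l⟫) := by
    refine Finset.sum_congr rfl fun k _ => Finset.sum_congr rfl fun l _ => by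
      simp only [Bin, LinearMap.mk₂_apply, outM]
  rw [this, expand2 hb (Bin R (e i) (e i)) p q]
  simp [Bin]

lemma sok_del_del (R : CurvMap V) (e : Fin n → V) :
    sok R e (delM n) (delM n) = ∑ i, ∑ k, R (e i) (e k) (e k) (e i) := by
  rw [sok_del_right]
  refine Finset.sum_congr rfl fun i _ => ?_
  simp [delM, mul_ite]

end MyAux3

section MyAux4

variable {V : Type*} [NormedAddCommGroup V] [InnerProductSpace ℝ V] {n N : ℕ}

/-- the submodule of symmetric traceless matrices -/
def symTrSub (n : ℕ) : Submodule ℝ (Fin n → Fin n → ℝ) where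
  carrier := {φ | IsSymTr φ}
  add_mem' := fun {a b} ha hb => ⟨fun i j => by simp [ha.1 i j, hb.1 i j],
    by simp [Finset.sum_add_distrib, ha.2, hb.2]⟩
  zero_mem' := ⟨fun i j => rfl, by simp⟩
  smul_mem' := fun c a ha => ⟨fun i j => by simp [ha.1 i j],
    by simp [← Finset.mul_sum, ha.2]⟩

lemma two_mul_choose_two : ∀ k : ℕ, 2 * ((k + 1).choose 2) = k * (k + 1)
  | 0 => rfl
  | (k + 1) => by
    rw [Nat.choose_succ_succ (k + 1) 1, Nat.mul_add, two_mul_choose_two k,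
      Nat.choose_one_right]
    ring

lemma card_le_pairs (hn : 1 ≤ n) :
    2 * Fintype.card {p : Fin n × Fin n // p.1 ≤ p.2} = n * (n + 1) := by
  have h1 : Fintype.card {p : Fin n × Fin n // p.1 ≤ p.2} = Fintype.card (Sym2 (Fin n)) :=
    (Fintype.card_congr Sym2.sortEquiv).symm
  rw [h1, Sym2.card, Fintype.card_fin, two_mul_choose_two]

lemma finrank_symTr_le (hn : 3 ≤ n) (hN : 2 * N = (n - 1) * (n + 2)) :
    Module.finrank ℝ (symTrSub n) ≤ N := by
  classical
  have hn1 : (n - 1) < n := by omega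
  set z : {p : Fin n × Fin n // p.1 ≤ p.2} := ⟨(⟨n - 1, hn1⟩, ⟨n - 1, hn1⟩), le_refl _⟩ with hz
  set ι := {q : {p : Fin n × Fin n // p.1 ≤ p.2} // ¬ (q = z)} with hι
  -- the linear restriction map
  let L : symTrSub n →ₗ[ℝ] (ι → ℝ) :=
    { toFun := fun f => fun q => (f : Fin n → Fin n → ℝ) q.1.1.1 q.1.1.2
      map_add' := fun f g => rfl
      map_smul' := fun c f => rfl }
  have hinj : Function.Injective L := by
    rw [injective_iff_map_eq_zero]
    intro f hf
    have hzero : ∀ i j : Fin n, i ≤ j → ¬(i = ⟨n-1,hn1⟩ ∧ j = ⟨n-1,hn1⟩) →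
        (f : Fin n → Fin n → ℝ) i j = 0 := by
      intro i j hij hne
      have : (⟨(i, j), hij⟩ : {p : Fin n × Fin n // p.1 ≤ p.2}) ≠ z := by
        intro hcon
        apply hne
        have := congrArg (fun q => q.1) hcon
        exact ⟨congrArg Prod.fst this, congrArg Prod.snd this⟩
      exact congrFun hf (⟨⟨(i, j), hij⟩, this⟩ : ι)
    -- the last diagonal entry vanishes by tracelessness
    have hlast : (f : Fin n → Fin n → ℝ) ⟨n-1,hn1⟩ ⟨n-1,hn1⟩ = 0 := by
      have htr := f.2.2
      rw [Finset.sum_eq_single (⟨n-1,hn1⟩ : Fin n)] at htr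
      · exact htr
      · intro k _ hk
        exact hzero k k (le_refl _) (fun h => hk h.1)
      · simp
    ext i j
    rcases le_total i j with hij | hij
    · by_cases hd : i = ⟨n-1,hn1⟩ ∧ j = ⟨n-1,hn1⟩
      · rw [hd.1, hd.2]; exact hlast
      · exact hzero i j hij hd
    · rw [f.2.1 i j]
      by_cases hd : j = ⟨n-1,hn1⟩ ∧ i = ⟨n-1,hn1⟩
      · rw [hd.1, hd.2]; exact hlast
      · exact hzero j i hij hd
  have hr : Module.finrank ℝ (symTrSub n) ≤ Module.finrank ℝ (ι → ℝ) :=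
    LinearMap.finrank_le_finrank_of_injective hinj
  have hcard : Fintype.card ι = Fintype.card {p : Fin n × Fin n // p.1 ≤ p.2} - 1 := by
    rw [Fintype.card_subtype_compl, Fintype.card_subtype_eq]
  have hpairs := card_le_pairs (n := n) (by omega)
  have harith : n * (n + 1) = (n - 1) * (n + 2) + 2 := by
    obtain ⟨m, rfl⟩ : ∃ m, n = m + 3 := ⟨n - 3, by omega⟩
    have h3 : m + 3 - 1 = m + 2 := rfl
    rw [h3]
    ring
  have hcN : Fintype.card ι = N := by
    rw [harith] at hpairs
    generalize hT : (n - 1) * (n + 2) = T at hpairs hN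
    omega
  rw [Module.finrank_pi ℝ] at hr
  omega

end MyAux4

section MyAux5

variable {V : Type*} [NormedAddCommGroup V] [InnerProductSpace ℝ V] {n N : ℕ}

lemma span_symtr (hn : 3 ≤ n) (hN : 2 * N = (n - 1) * (n + 2))
    (Φ : Fin N → Fin n → Fin n → ℝ) (hsym : ∀ β, IsSymTr (Φ β))
    (horth : ∀ β γ, tip (Φ β) (Φ γ) = if β = γ then 1 else 0)
    {φ : Fin n → Fin n → ℝ} (hφ : IsSymTr φ) :
    φ ∈ Submodule.span ℝ (Set.range Φ) := by
  have hlin : LinearIndependent ℝ Φ := by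
    rw [Fintype.linearIndependent_iff]
    intro g hg γ
    have h1 : tip (∑ i, g i • Φ i) (Φ γ) = 0 := by rw [hg]; simp [tip]
    rw [← tipL_apply, map_sum, LinearMap.sum_apply] at h1
    simp only [map_smul, LinearMap.smul_apply, smul_eq_mul, tipL_apply, horth,
      mul_ite, mul_one, mul_zero, Finset.sum_ite_eq', Finset.mem_univ, if_true] at h1
    exact h1
  have hW : Module.finrank ℝ (Submodule.span ℝ (Set.range Φ)) = N := by
    rw [finrank_span_eq_card hlin, Fintype.card_fin]
  have heq : Submodule.span ℝ (Set.range Φ) = symTrSub n := by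
    refine Submodule.eq_of_le_of_finrank_le ?_ (by rw [hW]; exact finrank_symTr_le hn hN)
    rw [Submodule.span_le]; rintro _ ⟨β, rfl⟩; exact hsym β
  rw [heq]; exact hφ

lemma sum_small_le (R : CurvMap V) (e : Fin n → V) (lam : Fin N → ℝ)
    (Φ : Fin N → Fin n → Fin n → ℝ) (hmono : Monotone lam)
    (horth : ∀ β γ, tip (Φ β) (Φ γ) = if β = γ then 1 else 0)
    (heig : ∀ β (ψ : Fin n → Fin n → ℝ), IsSymTr ψ → sok R e (Φ β) ψ = lam β * tip (Φ β) ψ)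
    (hn0 : 0 < n) (hnN : n ≤ N)
    (φ : Fin n → Fin n → Fin n → ℝ) (hsym : ∀ α, IsSymTr (φ α))
    (hφorth : ∀ α γ, tip (φ α) (φ γ) = if α = γ then 1 else 0)
    (hspan : ∀ α, φ α ∈ Submodule.span ℝ (Set.range Φ)) :
    (∑ β : Fin N, if (β : ℕ) < n then lam β else 0) ≤ ∑ α, sok R e (φ α) (φ α) := by
  choose d hd using fun α => Submodule.mem_span_range_iff_exists_fun ℝ |>.mp (hspan α)
  have htipΦ : ∀ α β, tip (φ α) (Φ β) = d α β := by
    intro α β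
    rw [← hd α, ← tipL_apply, map_sum, LinearMap.sum_apply]
    simp only [map_smul, LinearMap.smul_apply, smul_eq_mul, tipL_apply, horth,
      mul_ite, mul_one, mul_zero, Finset.sum_ite_eq', Finset.mem_univ, if_true]
  have hsok : ∀ α, sok R e (φ α) (φ α) = ∑ β, d α β ^ 2 * lam β := by
    intro α
    calc sok R e (φ α) (φ α) = sokL R e (∑ β, d α β • Φ β) (φ α) := by rw [hd α]; rfl
      _ = ∑ β, d α β ^ 2 * lam β := by
          rw [map_sum, LinearMap.sum_apply]
          simp only [map_smul, LinearMap.smul_apply, smul_eq_mul, sokL_apply]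
          refine Finset.sum_congr rfl fun β _ => ?_
          rw [heig β (φ α) (hsym α), tip_comm, htipΦ]
          ring
  have hnorm : ∀ α, ∑ β, d α β ^ 2 = 1 := by
    intro α
    have h1 : tip (∑ β, d α β • Φ β) (φ α) = 1 := by
      rw [hd α, hφorth]; simp
    rw [← tipL_apply, map_sum, LinearMap.sum_apply] at h1
    simp only [map_smul, LinearMap.smul_apply, smul_eq_mul, tipL_apply] at h1
    calc ∑ β, d α β ^ 2 = ∑ β, d α β * tip (Φ β) (φ α) := by
          refine Finset.sum_congr rfl fun β _ => ?_
          rw [tip_comm, htipΦ]; ring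
      _ = 1 := h1
  set w : Fin N → ℝ := fun β => ∑ α, d α β ^ 2 with hw
  have hw0 : ∀ β, 0 ≤ w β := fun β => Finset.sum_nonneg fun α _ => sq_nonneg _
  -- Bessel's inequality
  have hw1 : ∀ β, w β ≤ 1 := by
    intro β
    set S : Fin n → Fin n → ℝ := ∑ α, d α β • φ α with hS
    have htipXS : ∀ X : Fin n → Fin n → ℝ, tip X S = ∑ α, d α β * tip X (φ α) := by
      intro X
      rw [← tipL_apply, hS, map_sum]
      simp only [map_smul, smul_eq_mul, tipL_apply]
    have h2 : tip (Φ β) S = w β := by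
      rw [htipXS]
      refine Finset.sum_congr rfl fun α _ => ?_
      rw [tip_comm, htipΦ]; ring
    have hSφ : ∀ α, tip S (φ α) = d α β := by
      intro α
      rw [tip_comm, htipXS (φ α)]
      simp only [hφorth, mul_ite, mul_one, mul_zero, Finset.sum_ite_eq, Finset.mem_univ,
        if_true]
    have h3 : tip S S = w β := by
      rw [htipXS S]
      refine Finset.sum_congr rfl fun α _ => ?_
      rw [hSφ α]; ring
    have h4 : tip S (Φ β) = w β := by rw [tip_comm]; exact h2
    have hexp : tip (Φ β - S) (Φ β - S) = 1 - w β := by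
      have hsplit : tip (Φ β - S) (Φ β - S)
          = tip (Φ β) (Φ β) - tip S (Φ β) - (tip (Φ β) S - tip S S) := by
        simp only [← tipL_apply, map_sub, LinearMap.sub_apply]
      rw [hsplit, h2, h3, h4, horth β β]
      simp
    have := tip_self_nonneg (Φ β - S)
    rw [hexp] at this
    linarith
  have hsumw : ∑ β, w β = (n : ℝ) := by
    rw [hw]
    rw [Finset.sum_comm]
    simp only [hnorm]
    simp
  -- the threshold eigenvalue
  have hn1N : n - 1 < N := by omega
  set t : ℝ := lam ⟨n - 1, hn1N⟩ with ht
  have hchi : ∑ β : Fin N, (if (β : ℕ) < n then (1:ℝ) else 0) = (n : ℝ) := by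
    rw [Fin.sum_univ_eq_sum_range (fun i => if i < n then (1:ℝ) else 0) N]
    rw [← Finset.sum_filter]
    have : (Finset.range N).filter (fun i => i < n) = Finset.range n := by
      ext a; simp only [Finset.mem_filter, Finset.mem_range]; omega
    rw [this]
    simp
  have key : ∀ β : Fin N,
      0 ≤ (w β - if (β : ℕ) < n then 1 else 0) * (lam β - t) := by
    intro β
    by_cases h : (β : ℕ) < n
    · have hle : lam β ≤ t := hmono (by rw [Fin.le_def]; simp; omega)
      rw [if_pos h, show (w β - 1) * (lam β - t) = (1 - w β) * (t - lam β) from by ring]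
      exact mul_nonneg (by linarith [hw1 β]) (by linarith)
    · have hle : t ≤ lam β := hmono (by rw [Fin.le_def]; simp; omega)
      rw [if_neg h, sub_zero]
      exact mul_nonneg (hw0 β) (by linarith)
  have hnonneg : 0 ≤ ∑ β, (w β - if (β : ℕ) < n then 1 else 0) * (lam β - t) :=
    Finset.sum_nonneg fun β _ => key β
  have htotal : ∑ β, (w β - if (β : ℕ) < n then 1 else 0) * (lam β - t)
      = (∑ β, w β * lam β) - (∑ β : Fin N, if (β : ℕ) < n then lam β else 0)
        - t * (∑ β, w β) + t * (∑ β : Fin N, (if (β : ℕ) < n then (1:ℝ) else 0)) := by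
    rw [Finset.mul_sum, Finset.mul_sum, ← Finset.sum_sub_distrib, ← Finset.sum_sub_distrib,
      ← Finset.sum_add_distrib]
    refine Finset.sum_congr rfl fun β _ => ?_
    by_cases h : (β : ℕ) < n <;> simp [h] <;> ring
  have hfinal : ∑ α, sok R e (φ α) (φ α) = ∑ β, w β * lam β := by
    calc ∑ α, sok R e (φ α) (φ α) = ∑ α, ∑ β, d α β ^ 2 * lam β :=
          Finset.sum_congr rfl fun α _ => hsok α
      _ = ∑ β, ∑ α, d α β ^ 2 * lam β := Finset.sum_comm
      _ = ∑ β, w β * lam β := by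
          refine Finset.sum_congr rfl fun β _ => ?_
          rw [hw, Finset.sum_mul]
  rw [hfinal]
  rw [htotal, hsumw, hchi] at hnonneg
  linarith
end MyAux5

section MyAux6

variable {V : Type*} [NormedAddCommGroup V] [InnerProductSpace ℝ V] {n N : ℕ}

lemma psum_coe (lam : Fin N → ℝ) (n : ℕ) :
    psum lam (n : ℝ) = ∑ β : Fin N, if (β : ℕ) < n then lam β else 0 := by
  simp [psum, Nat.floor_natCast]

lemma ric_smul (R : CurvMap V) (e : Fin n → V) (c : ℝ) (x : V) :
    ric R e (c • x) (c • x) = c ^ 2 * ric R e x x := by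
  unfold ric
  simp only [map_smul, LinearMap.smul_apply, smul_eq_mul, Finset.mul_sum]
  exact Finset.sum_congr rfl fun i _ => by ring

lemma ric_zero (R : CurvMap V) (e : Fin n → V) : ric R e 0 0 = 0 := by
  simp [ric]

private def Bxx (R : CurvMap V) (x : V) : V →ₗ[ℝ] V →ₗ[ℝ] ℝ :=
  LinearMap.mk₂ ℝ (fun a b => R x a x b)
    (fun a a' b => by simp [map_add, LinearMap.add_apply])
    (fun c a b => by simp [map_smul, LinearMap.smul_apply])
    (fun a b b' => by simp [map_add, LinearMap.add_apply])
    (fun c a b => by simp [map_smul, LinearMap.smul_apply])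

/-- trace of the bilinear form v,w ↦ R x v x w is basis independent -/
lemma trace_change (R : CurvMap V) {e : Fin n → V}
    (hb : ∀ v : V, ∑ i, ⟪v, e i⟫ • e i = v)
    (hee : ∀ i j, ⟪e i, e j⟫ = if i = j then (1:ℝ) else 0)
    {u : Fin n → V} (hpar2 : ∀ v w : V, ∑ α, ⟪v, u α⟫ * ⟪w, u α⟫ = ⟪v, w⟫)
    (x : V) : ∑ α, R x (u α) x (u α) = ric R e x x := by
  have h1 : ∀ α, R x (u α) x (u α)
      = ∑ i, ∑ j, R x (e i) x (e j) * (⟪u α, e i⟫ * ⟪u α, e j⟫) := by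
    intro α
    have := expand2 hb (Bxx R x) (u α) (u α)
    simp only [Bxx, LinearMap.mk₂_apply] at this
    exact this.symm
  calc ∑ α, R x (u α) x (u α)
      = ∑ α, ∑ i, ∑ j, R x (e i) x (e j) * (⟪u α, e i⟫ * ⟪u α, e j⟫) :=
        Finset.sum_congr rfl fun α _ => h1 α
    _ = ∑ i, ∑ j, R x (e i) x (e j) * (∑ α, ⟪e i, u α⟫ * ⟪e j, u α⟫) := by
        rw [Finset.sum_comm]
        refine Finset.sum_congr rfl fun i _ => ?_
        rw [Finset.sum_comm]
        refine Finset.sum_congr rfl fun j _ => ?_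
        rw [Finset.mul_sum]
        refine Finset.sum_congr rfl fun α _ => ?_
        rw [real_inner_comm (e i) (u α), real_inner_comm (e j) (u α)]
    _ = ric R e x x := by
        unfold ric
        refine Finset.sum_congr rfl fun i _ => ?_
        have : ∀ j, R x (e i) x (e j) * (∑ α, ⟪e i, u α⟫ * ⟪e j, u α⟫)
            = if i = j then R x (e i) x (e j) else 0 := by
          intro j
          rw [hpar2, hee]
          split <;> simp
        rw [Finset.sum_congr rfl fun j _ => this j, Finset.sum_ite_eq]
        simp

end MyAux6

section MyAux7

variable {V : Type*} [NormedAddCommGroup V] [InnerProductSpace ℝ V] {n : ℕ}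

lemma tip_smul_left (c : ℝ) (X Y : Fin n → Fin n → ℝ) : tip (c • X) Y = c * tip X Y := by
  rw [← tipL_apply, map_smul, LinearMap.smul_apply, smul_eq_mul, tipL_apply]

lemma tip_smul_right (c : ℝ) (X Y : Fin n → Fin n → ℝ) : tip X (c • Y) = c * tip X Y := by
  rw [← tipL_apply, map_smul, smul_eq_mul, tipL_apply]

lemma tip_smul_smul (c c' : ℝ) (X Y : Fin n → Fin n → ℝ) :
    tip (c • X) (c' • Y) = c * c' * tip X Y := by
  rw [tip_smul_left, tip_smul_right]; ring

lemma tip_add_add (X Y Z W : Fin n → Fin n → ℝ) :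
    tip (X + Y) (Z + W) = tip X Z + tip X W + tip Y Z + tip Y W := by
  simp only [← tipL_apply, map_add, LinearMap.add_apply]; ring

lemma tip_sub_sub (X Y Z W : Fin n → Fin n → ℝ) :
    tip (X - Y) (Z - W) = tip X Z - tip X W - tip Y Z + tip Y W := by
  simp only [← tipL_apply, map_sub, LinearMap.sub_apply]; ring

lemma tip_sub_add (X Y Z W : Fin n → Fin n → ℝ) :
    tip (X - Y) (Z + W) = tip X Z + tip X W - tip Y Z - tip Y W := by
  simp only [← tipL_apply, map_sub, map_add, LinearMap.sub_apply, LinearMap.add_apply]; ring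

lemma sok_smul_smul (R : CurvMap V) (e : Fin n → V) (c c' : ℝ) (X Y : Fin n → Fin n → ℝ) :
    sok R e (c • X) (c' • Y) = c * c' * sok R e X Y := by
  rw [← sokL_apply, map_smul, map_smul, LinearMap.smul_apply, smul_eq_mul, smul_eq_mul,
    sokL_apply]; ring

lemma sok_smul_left (R : CurvMap V) (e : Fin n → V) (c : ℝ) (X Y : Fin n → Fin n → ℝ) :
    sok R e (c • X) Y = c * sok R e X Y := by
  rw [← sokL_apply, map_smul, LinearMap.smul_apply, smul_eq_mul, sokL_apply]

lemma sok_smul_right (R : CurvMap V) (e : Fin n → V) (c : ℝ) (X Y : Fin n → Fin n → ℝ) :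
    sok R e X (c • Y) = c * sok R e X Y := by
  rw [← sokL_apply, map_smul, smul_eq_mul, sokL_apply]

lemma sok_add_add (R : CurvMap V) (e : Fin n → V) (X Y Z W : Fin n → Fin n → ℝ) :
    sok R e (X + Y) (Z + W) = sok R e X Z + sok R e X W + sok R e Y Z + sok R e Y W := by
  simp only [← sokL_apply, map_add, LinearMap.add_apply]; ring

lemma sok_sub_sub (R : CurvMap V) (e : Fin n → V) (X Y Z W : Fin n → Fin n → ℝ) :
    sok R e (X - Y) (Z - W) = sok R e X Z - sok R e X W - sok R e Y Z + sok R e Y W := by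
  simp only [← sokL_apply, map_sub, LinearMap.sub_apply]; ring

end MyAux7

section MyAux8

variable {V : Type*} [NormedAddCommGroup V] [InnerProductSpace ℝ V]

set_option maxHeartbeats 2000000 in
lemma key_unit [FiniteDimensional ℝ V]
    (n : ℕ) (hn : 3 ≤ n) (hdim : Module.finrank ℝ V = n)
    (e : Fin n → V) (he : Orthonormal ℝ e)
    (R : CurvMap V) (hR : IsAlgCurv R)
    (N : ℕ) (hN : 2 * N = (n - 1) * (n + 2))
    (lam : Fin N → ℝ) (Φ : Fin N → Fin n → Fin n → ℝ)
    (hE : IsEigenSystem R e lam Φ)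
    (hC : 0 ≤ psum lam (n : ℝ))
    (x : V) (hx : ‖x‖ = 1) :
    scal R e ≤ (n : ℝ) * ((n : ℝ) + 1) * ric R e x x := by
  obtain ⟨hmono, hsymΦ, horthΦ, heig⟩ := hE
  haveI : NeZero n := ⟨by omega⟩
  -- orthonormal basis from e
  have hcard : Fintype.card (Fin n) = Module.finrank ℝ V := by simp [hdim]
  have hb : ∀ v : V, ∑ i, ⟪v, e i⟫ • e i = v := by
    set b0 := basisOfLinearIndependentOfCardEqFinrank he.linearIndependent hcard with hb0def
    have hb0 : ⇑b0 = e := coe_basisOfLinearIndependentOfCardEqFinrank _ _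
    set b := b0.toOrthonormalBasis (by rwa [hb0]) with hbdef
    have hbe : ∀ i, b i = e i := by
      intro i
      rw [hbdef, Module.Basis.coe_toOrthonormalBasis, hb0]
    intro v
    have h1 := b.sum_repr v
    have h2 : ∀ i, b.repr v i • b i = ⟪v, e i⟫ • e i := by
      intro i
      rw [b.repr_apply_apply, hbe, real_inner_comm]
    rw [← Finset.sum_congr rfl fun i _ => h2 i]
    exact h1
  have hee : ∀ i j, ⟪e i, e j⟫ = if i = j then (1:ℝ) else 0 := orthonormal_iff_ite.mp he
  -- extend x to an orthonormal basis
  have hsing : Orthonormal ℝ (({0} : Set (Fin n)).restrict (fun _ : Fin n => x)) := by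
    refine ⟨fun i => hx, fun i j hij => absurd (Subtype.ext ?_) hij⟩
    have hi := i.2; have hj := j.2
    simp only [Set.mem_singleton_iff] at hi hj
    rw [hi, hj]
  obtain ⟨u, hu⟩ :=
    Orthonormal.exists_orthonormalBasis_extension_of_card_eq (by simp [hdim]) hsing
  have hu0 : u 0 = x := hu 0 rfl
  have hxu : ∀ α : Fin n, α ≠ 0 → ⟪x, u α⟫ = 0 := by
    intro α hα
    rw [← hu0]
    exact u.orthonormal.2 (Ne.symm hα)
  have huu : ∀ α γ : Fin n, ⟪u α, u γ⟫ = if α = γ then (1:ℝ) else 0 :=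
    orthonormal_iff_ite.mp u.orthonormal
  have hpar2 : ∀ v w : V, ∑ α, ⟪v, u α⟫ * ⟪w, u α⟫ = ⟪v, w⟫ := by
    intro v w
    rw [← u.sum_inner_mul_inner v w]
    exact Finset.sum_congr rfl fun α _ => by rw [real_inner_comm w (u α)]
  have hxx : ⟪x, x⟫ = (1:ℝ) := by
    rw [real_inner_self_eq_norm_mul_norm, hx]; norm_num
  -- constants
  have hn3 : (3:ℝ) ≤ (n:ℝ) := by exact_mod_cast hn
  have hnne : (n:ℝ) ≠ 0 := by linarith
  have hn1 : (0:ℝ) < (n:ℝ) - 1 := by linarith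
  set c0 : ℝ := Real.sqrt ((n:ℝ) / ((n:ℝ) - 1)) with hc0
  have hc02 : c0 ^ 2 = (n:ℝ) / ((n:ℝ) - 1) := by
    rw [hc0, Real.sq_sqrt]; positivity
  set s2 : ℝ := (Real.sqrt 2)⁻¹ with hs2
  have hs22 : s2 ^ 2 = 2⁻¹ := by
    rw [hs2, inv_pow, Real.sq_sqrt (by norm_num : (0:ℝ) ≤ 2)]
  -- the test tensors
  set A : Fin n → Fin n → ℝ := outM e x x with hA
  set D : Fin n → Fin n → ℝ := delM n with hD
  set χ : Fin n → Fin n → ℝ := A - (n:ℝ)⁻¹ • D with hχ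
  set φ : Fin n → Fin n → Fin n → ℝ :=
    fun α => if α = 0 then c0 • χ else s2 • (outM e x (u α) + outM e (u α) x) with hφ
  -- symmetric traceless
  have hχsym : IsSymTr χ := by
    constructor
    · intro i j
      simp only [hχ, hA, hD, Pi.sub_apply, Pi.smul_apply, smul_eq_mul, outM, delM]
      by_cases h : i = j
      · subst h; ring
      · rw [if_neg h, if_neg (Ne.symm h)]; ring
    · have : ∀ i, χ i i = ⟪x, e i⟫ * ⟪x, e i⟫ - (n:ℝ)⁻¹ := by
        intro i
        simp [hχ, hA, hD, outM, delM]
      rw [Finset.sum_congr rfl fun i _ => this i, Finset.sum_sub_distrib,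
        parseval hb x x, hxx]
      simp [hnne]
  have hψsym : ∀ α : Fin n, α ≠ 0 → IsSymTr (outM e x (u α) + outM e (u α) x) := by
    intro α hα
    constructor
    · intro i j
      simp only [Pi.add_apply, outM]
      ring
    · have : ∀ i, (outM e x (u α) + outM e (u α) x) i i
          = ⟪x, e i⟫ * ⟪u α, e i⟫ + ⟪u α, e i⟫ * ⟪x, e i⟫ := fun i => rfl
      rw [Finset.sum_congr rfl fun i _ => this i, Finset.sum_add_distrib]
      have h1 : ∑ i, ⟪x, e i⟫ * ⟪u α, e i⟫ = 0 := by rw [parseval hb, hxu α hα]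
      have h2 : ∑ i, ⟪u α, e i⟫ * ⟪x, e i⟫ = 0 := by
        rw [parseval hb, real_inner_comm, hxu α hα]
      rw [h1, h2]; ring
  have hsymφ : ∀ α, IsSymTr (φ α) := by
    intro α
    by_cases h : α = 0
    · subst h
      simp only [hφ, if_pos rfl]
      exact (symTrSub n).smul_mem c0 hχsym
    · simp only [hφ, if_neg h]
      exact (symTrSub n).smul_mem s2 (hψsym α h)
  -- tip computations
  have tχχ : tip χ χ = 1 - (n:ℝ)⁻¹ := by
    rw [hχ, tip_sub_sub, tip_smul_right, tip_smul_left, tip_smul_smul, hA, hD,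
      tip_out_out hb, tip_out_del hb, tip_comm (delM n) (outM e x x), tip_out_del hb,
      tip_del_del, hxx]
    field_simp
    ring
  have tχψ : ∀ α : Fin n, α ≠ 0 → tip χ (outM e x (u α) + outM e (u α) x) = 0 := by
    intro α hα
    rw [hχ, tip_sub_add, hA, hD, tip_out_out hb, tip_out_out hb, tip_smul_left,
      tip_smul_left, tip_comm (delM n), tip_out_del hb, tip_comm (delM n), tip_out_del hb,
      hxx, hxu α hα, real_inner_comm x (u α), hxu α hα]
    ring
  have tψψ : ∀ α γ : Fin n, α ≠ 0 → γ ≠ 0 →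
      tip (outM e x (u α) + outM e (u α) x) (outM e x (u γ) + outM e (u γ) x)
        = if α = γ then 2 else 0 := by
    intro α γ hα hγ
    rw [tip_add_add, tip_out_out hb, tip_out_out hb, tip_out_out hb, tip_out_out hb,
      hxx, huu, hxu γ hγ, real_inner_comm x (u α), hxu α hα]
    by_cases h : α = γ
    · norm_num [h]
    · norm_num [h]
  have hφ0 : φ 0 = c0 • χ := by simp [hφ]
  have hφn : ∀ α : Fin n, α ≠ 0 → φ α = s2 • (outM e x (u α) + outM e (u α) x) :=
    fun α hα => by simp [hφ, hα]
  have hφorth : ∀ α γ, tip (φ α) (φ γ) = if α = γ then 1 else 0 := by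
    intro α γ
    by_cases hα : α = 0 <;> by_cases hγ : γ = 0
    · subst hα; subst hγ
      rw [hφ0, tip_smul_smul, tχχ, if_pos rfl, show c0 * c0 = c0 ^ 2 from by ring, hc02]
      field_simp
    · subst hα
      rw [hφ0, hφn γ hγ, tip_smul_smul, tχψ γ hγ, if_neg (fun h => hγ h.symm)]
      ring
    · subst hγ
      rw [hφ0, hφn α hα, tip_smul_smul, tip_comm, tχψ α hα, if_neg hα]
      ring
    · rw [hφn α hα, hφn γ hγ, tip_smul_smul, tψψ α γ hα hγ]
      by_cases h : α = γ
      · rw [if_pos h, if_pos h, show s2 * s2 = s2 ^ 2 from by ring, hs22]; norm_num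
      · rw [if_neg h, if_neg h]; ring
  -- sok computations
  have sAA : sok R e A A = 0 := by
    rw [hA, sok_out_out R hb]
    exact hR.diag1 x x x
  have hric1 : ∀ i, R (e i) x x (e i) = -(R x (e i) x (e i)) := by
    intro i
    rw [hR.pairSymm (e i) x x (e i), hR.alt2 x (e i) (e i) x]
  have sAD : sok R e A D = -(ric R e x x) := by
    rw [hA, hD, sok_out_del R hb, Finset.sum_congr rfl fun i _ => hric1 i,
      Finset.sum_neg_distrib]
    rfl
  have sDA : sok R e D A = -(ric R e x x) := by
    rw [hA, hD, sok_del_out R hb]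
    have : ∀ k, R x (e k) (e k) x = -(R x (e k) x (e k)) := fun k => hR.alt2 x (e k) (e k) x
    rw [Finset.sum_congr rfl fun k _ => this k, Finset.sum_neg_distrib]
    rfl
  have sDD : sok R e D D = -(scal R e) := by
    rw [hD, sok_del_del]
    have h1 : ∀ i k : Fin n, R (e i) (e k) (e k) (e i) = -(R (e i) (e k) (e i) (e k)) :=
      fun i k => hR.alt2 (e i) (e k) (e k) (e i)
    rw [Finset.sum_congr rfl fun i (_ : i ∈ Finset.univ) =>
      Finset.sum_congr rfl fun k _ => h1 i k]
    simp only [Finset.sum_neg_distrib]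
    rfl
  have sχχ : sok R e χ χ = 2 * ric R e x x / (n:ℝ) - scal R e / (n:ℝ)^2 := by
    rw [hχ, sok_sub_sub, sok_smul_smul, sok_smul_left, sok_smul_right,
      sAA, sAD, sDA, sDD]
    field_simp
    ring
  have sψψ : ∀ α : Fin n, α ≠ 0 →
      sok R e (outM e x (u α) + outM e (u α) x) (outM e x (u α) + outM e (u α) x)
        = 2 * R x (u α) x (u α) := by
    intro α hα
    rw [sok_add_add, sok_out_out R hb, sok_out_out R hb, sok_out_out R hb,
      sok_out_out R hb, hR.diag1, hR.diag1]
    have : R (u α) x (u α) x = R x (u α) x (u α) := by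
      rw [hR.antisymm (u α) x (u α) x, hR.alt2 x (u α) (u α) x]
      ring
    rw [this]
    ring
  -- the sum over the test family
  have htrace := trace_change R hb hee hpar2 x
  have hsums : ∑ α, sok R e (φ α) (φ α)
      = c0^2 * (2 * ric R e x x / (n:ℝ) - scal R e / (n:ℝ)^2) + ric R e x x := by
    rw [← Finset.add_sum_erase Finset.univ _ (Finset.mem_univ (0 : Fin n))]
    have h0 : sok R e (φ 0) (φ 0)
        = c0^2 * (2 * ric R e x x / (n:ℝ) - scal R e / (n:ℝ)^2) := by
      simp only [hφ, if_pos rfl]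
      rw [sok_smul_smul, sχχ, show c0 * c0 = c0 ^ 2 from by ring]
    have hrest : ∑ α ∈ Finset.univ.erase (0 : Fin n), sok R e (φ α) (φ α)
        = ∑ α ∈ Finset.univ.erase (0 : Fin n), R x (u α) x (u α) := by
      refine Finset.sum_congr rfl fun α hα => ?_
      have hα0 : α ≠ 0 := (Finset.mem_erase.mp hα).1
      simp only [hφ, if_neg hα0]
      rw [sok_smul_smul, sψψ α hα0, show s2 * s2 = s2 ^ 2 from by ring, hs22]
      ring
    have hsum2 : ∑ α ∈ Finset.univ.erase (0 : Fin n), R x (u α) x (u α)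
        = ric R e x x := by
      have hall := Finset.add_sum_erase Finset.univ (fun α => R x (u α) x (u α))
        (Finset.mem_univ (0 : Fin n))
      rw [htrace] at hall
      have h00 : R x (u 0) x (u 0) = 0 := by rw [hu0]; exact hR.diag1 x x x
      linarith [hall]
    rw [h0, hrest, hsum2]
  -- apply the eigenvalue bound
  have hnN : n ≤ N := by
    obtain ⟨m, rfl⟩ : ∃ m, n = m + 3 := ⟨n - 3, by omega⟩
    have h3 : m + 3 - 1 = m + 2 := rfl
    rw [h3] at hN
    nlinarith [hN]
  have hspanφ : ∀ α, φ α ∈ Submodule.span ℝ (Set.range Φ) :=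
    fun α => span_symtr hn hN Φ hsymΦ horthΦ (hsymφ α)
  have hmain := sum_small_le R e lam Φ hmono horthΦ heig (by omega) hnN φ hsymφ hφorth hspanφ
  have hCn : (0:ℝ) ≤ ∑ β : Fin N, if (β : ℕ) < n then lam β else 0 := by
    rw [← psum_coe]; exact hC
  have hpos : (0:ℝ) ≤ c0^2 * (2 * ric R e x x / (n:ℝ) - scal R e / (n:ℝ)^2) + ric R e x x :=
    le_trans hCn (hmain.trans_eq hsums)
  rw [hc02] at hpos
  set r := ric R e x x
  set s := scal R e
  have heq2 : (n:ℝ)/((n:ℝ)-1) * (2*r/(n:ℝ) - s/(n:ℝ)^2) + r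
      = (r*((n:ℝ)^2+(n:ℝ)) - s) / ((n:ℝ)*((n:ℝ)-1)) := by
    field_simp
    ring
  rw [heq2] at hpos
  have hden : (0:ℝ) < (n:ℝ)*((n:ℝ)-1) := by nlinarith
  have hnum : (0:ℝ) ≤ r*((n:ℝ)^2+(n:ℝ)) - s := by
    by_contra hcon
    push_neg at hcon
    have := div_neg_of_neg_of_pos hcon hden
    linarith
  have hrw : (n:ℝ)*((n:ℝ)+1)*r = r*((n:ℝ)^2+(n:ℝ)) := by ring
  linarith

end MyAux8
/-- Corollary 3.2: if the curvature operator of the second kind is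
`n`-nonnegative (`λ₁ + ⋯ + λ_n ≥ 0`), then
`Ric(x,x) ≥ (S/(n(n+1)))·|x|² ≥ 0` for all `x`. -/
theorem stmt_17 {V : Type*} [NormedAddCommGroup V] [InnerProductSpace ℝ V]
    [FiniteDimensional ℝ V]
    (n : ℕ) (hn : 3 ≤ n) (hdim : Module.finrank ℝ V = n)
    (e : Fin n → V) (he : Orthonormal ℝ e)
    (R : CurvMap V) (hR : IsAlgCurv R)
    (N : ℕ) (hN : 2 * N = (n - 1) * (n + 2))
    (lam : Fin N → ℝ) (Φ : Fin N → Fin n → Fin n → ℝ)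
    (hE : IsEigenSystem R e lam Φ)
    (hC : 0 ≤ psum lam (n : ℝ)) :
    ∀ x : V,
      scal R e / ((n : ℝ) * ((n : ℝ) + 1)) * ‖x‖ ^ 2 ≤ ric R e x x ∧
      0 ≤ scal R e / ((n : ℝ) * ((n : ℝ) + 1)) * ‖x‖ ^ 2 := by

  have hkey : ∀ y : V, ‖y‖ = 1 → scal R e ≤ (n:ℝ) * ((n:ℝ) + 1) * ric R e y y :=
    fun y hy => key_unit n hn hdim e he R hR N hN lam Φ hE hC y hy
  have hn3 : (3:ℝ) ≤ (n:ℝ) := by exact_mod_cast hn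
  have hpos : (0:ℝ) < (n:ℝ) * ((n:ℝ) + 1) := by nlinarith
  have hsum : ∑ j, ric R e (e j) (e j) = scal R e := rfl
  have hS : 0 ≤ scal R e := by
    have h1 : ∀ j, scal R e ≤ (n:ℝ) * ((n:ℝ) + 1) * ric R e (e j) (e j) :=
      fun j => hkey (e j) (he.1 j)
    have h2 : (n:ℝ) * scal R e ≤ (n:ℝ) * ((n:ℝ) + 1) * scal R e := by
      calc (n:ℝ) * scal R e = ∑ _j : Fin n, scal R e := by
            rw [Finset.sum_const, Finset.card_univ, Fintype.card_fin, nsmul_eq_mul]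
        _ ≤ ∑ j, (n:ℝ) * ((n:ℝ) + 1) * ric R e (e j) (e j) :=
            Finset.sum_le_sum fun j _ => h1 j
        _ = (n:ℝ) * ((n:ℝ) + 1) * scal R e := by rw [← Finset.mul_sum, hsum]
    by_contra hcon
    push_neg at hcon
    have h3 : 0 ≤ (n:ℝ) * (n:ℝ) * scal R e := by nlinarith [h2]
    have hnn : (0:ℝ) < (n:ℝ) * (n:ℝ) := by nlinarith
    have h4 := mul_neg_of_pos_of_neg hnn hcon
    linarith
  intro x
  by_cases hx0 : x = 0
  · subst hx0
    refine ⟨?_, ?_⟩ <;> simp [ric_zero]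
  · have hxn : ‖x‖ ≠ 0 := norm_ne_zero_iff.mpr hx0
    set y := ‖x‖⁻¹ • x with hy
    have hy1 : ‖y‖ = 1 := by
      rw [hy, norm_smul, norm_inv, norm_norm, inv_mul_cancel₀ hxn]
    have hxy : x = ‖x‖ • y := by
      rw [hy, smul_smul, mul_inv_cancel₀ hxn, one_smul]
    have hkeyy := hkey y hy1
    rw [mul_comm] at hkeyy
    have hd : scal R e / ((n:ℝ) * ((n:ℝ) + 1)) ≤ ric R e y y := (div_le_iff₀ hpos).2 hkeyy
    have hricx : ric R e x x = ‖x‖ ^ 2 * ric R e y y := by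
      conv_lhs => rw [hxy]
      rw [ric_smul]
    constructor
    · calc scal R e / ((n:ℝ) * ((n:ℝ) + 1)) * ‖x‖ ^ 2 ≤ ric R e y y * ‖x‖ ^ 2 :=
          mul_le_mul_of_nonneg_right hd (sq_nonneg _)
        _ = ric R e x x := by rw [hricx]; ring
    · exact mul_nonneg (div_nonneg hS (le_of_lt hpos)) (sq_nonneg _)
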